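/- Let m = 2k with k ≥ 1 an integer, and fix y ∈ {0,1}^m with Σ y_i = k. For p ∈ [0,1]^m define the permutation-invariant likelihood L(p) = Σ_{σ ∈ S_m} Π_{i=1}^m p_{σ(i)}^{y_i} (1 - p_{σ(i)})^{1 - y_i} (the sum over all permutations σ of {1,...,m}). Then max_{p ∈ [0,1]^m} L(p) = (k!)^2, and the maximum is attained exactly at those vectors p having exactly k coordinates equal to 1 and exactly k coordinates equal to 0. In particular, the compound-decision mle of the empirical distribution of p_1,...,p_m is unique and puts mass 1/2 at 0 and mass 1/2 at 1. -/

import Mathlib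

/-!
Let `Y = {i | y i = 1}` and let `bernoulliWeight p t = ∏_{j ∈ t} p_j ∏_{j ∉ t} (1 - p_j)` be the
probability that independent Bernoulli(`p_j`) trials succeed exactly on `t`. The term of `σ` in
the likelihood is `bernoulliWeight p (σ Y)`, and exactly `k! · k!` permutations send `Y` onto a
given `k`-set, so `L p = (k!)² · ℙ(exactly k successes) ≤ (k!)²`, with equality iff every `t` of
positive weight has `k` elements. Both `{p = 1}` and `{p = 1} ∪ {j}` for `0 < p j < 1` have
positive weight, so equality forces `|{p = 1}| = k` and `p = 0` elsewhere.
-/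

open Finset Equiv Nat

theorem Equiv.Perm.image_finset_eq_iff {α : Type*} [DecidableEq α] (σ : Perm α)
    (A B : Finset α) : A.image σ = B ↔ ∀ a, σ a ∈ B ↔ a ∈ A := by
  rw [Finset.ext_iff, ← σ.forall_congr_right]
  simp [σ.injective.eq_iff, iff_comm]

variable {α : Type*} [Fintype α] [DecidableEq α]

def Equiv.Perm.imageFinsetEqEquiv (A B : Finset α) :
    {σ : Perm α // A.image σ = B} ≃
      ({a // a ∈ A} ≃ {b // b ∈ B}) × ({a // a ∉ A} ≃ {b // b ∉ B}) where
  toFun σ :=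
    have h := (σ.1.image_finset_eq_iff A B).1 σ.2
    (σ.1.subtypeEquiv fun a => (h a).symm, σ.1.subtypeEquiv fun a => (not_congr (h a)).symm)
  invFun e := ⟨Equiv.subtypeCongr e.1 e.2, by
    rw [Perm.image_finset_eq_iff]
    intro a
    by_cases ha : a ∈ A <;> simp [Equiv.subtypeCongr, sumCompl, ha, (e.2 ⟨a, _⟩).2]⟩
  left_inv σ := by
    ext a
    by_cases ha : a ∈ A <;> simp [Equiv.subtypeCongr, sumCompl, ha]
  right_inv e := by
    ext a <;> simp [Equiv.subtypeCongr, sumCompl, a.2]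

theorem Equiv.Perm.card_filter_image_finset_eq {A B : Finset α} (h : #A = #B) :
    #{σ : Perm α | A.image σ = B} = (#A)! * (#Aᶜ)! := by
  rw [← Fintype.card_subtype, Fintype.card_congr (Perm.imageFinsetEqEquiv A B), Fintype.card_prod,
    Fintype.card_equiv (Fintype.equivOfCardEq (by simp [h])),
    Fintype.card_equiv (Fintype.equivOfCardEq (by simp [h]))]
  simp [card_compl]

theorem Equiv.Perm.sum_image_finset {M : Type*} [AddCommMonoid M] (A : Finset α)
    (f : Finset α → M) :
    ∑ σ : Perm α, f (A.image σ) = ((#A)! * (#Aᶜ)!) • ∑ S ∈ powersetCard #A univ, f S := by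
  rw [← sum_fiberwise_of_maps_to (t := powersetCard #A univ) (g := fun σ : Perm α => A.image σ)
    fun σ _ => by simp [card_image_of_injective _ σ.injective], smul_sum]
  refine sum_congr rfl fun S hS => ?_
  rw [sum_congr rfl fun σ hσ => congrArg f (mem_filter.1 hσ).2, sum_const,
    Perm.card_filter_image_finset_eq (mem_powersetCard_univ.1 hS).symm]

theorem Finset.sum_eq_card_filter_eq_one {ι : Type*} (s : Finset ι) (y : ι → ℕ)
    (hy : ∀ i ∈ s, y i = 0 ∨ y i = 1) : ∑ i ∈ s, y i = #{i ∈ s | y i = 1} := by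
  rw [card_filter]
  refine sum_congr rfl fun i hi => ?_
  rcases hy i hi with h | h <;> simp [h]

def bernoulliWeight (p : α → ℝ) (t : Finset α) : ℝ :=
  (∏ j ∈ t, p j) * ∏ j ∈ tᶜ, (1 - p j)

theorem sum_bernoulliWeight (p : α → ℝ) : ∑ t, bernoulliWeight p t = 1 := by
  simp [bernoulliWeight, ← Fintype.prod_add]

theorem bernoulliWeight_nonneg {p : α → ℝ} (hp : ∀ i, p i ∈ Set.Icc 0 1) (t : Finset α) :
    0 ≤ bernoulliWeight p t :=
  mul_nonneg (prod_nonneg fun j _ => (hp j).1) (prod_nonneg fun j _ => sub_nonneg.2 (hp j).2)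

theorem bernoulliWeight_ne_zero_iff {p : α → ℝ} {t : Finset α} :
    bernoulliWeight p t ≠ 0 ↔ (∀ j ∈ t, p j ≠ 0) ∧ ∀ j ∉ t, p j ≠ 1 := by
  rw [bernoulliWeight, mul_ne_zero_iff, prod_ne_zero_iff, prod_ne_zero_iff]
  simp only [mem_compl, sub_ne_zero, ne_comm (a := (1 : ℝ))]

theorem prod_pow_mul_one_sub_pow_eq_bernoulliWeight (p : α → ℝ) {z : α → ℕ}
    (hz : ∀ i, z i = 0 ∨ z i = 1) :
    ∏ j, p j ^ z j * (1 - p j) ^ (1 - z j) = bernoulliWeight p {j | z j = 1} := by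
  rw [bernoulliWeight, compl_filter, ← prod_ite]
  refine prod_congr rfl fun j _ => ?_
  rcases hz j with h | h <;> simp [h]

theorem prod_perm_pow_mul_one_sub_pow_eq_bernoulliWeight (p : α → ℝ) {y : α → ℕ}
    (hy : ∀ i, y i = 0 ∨ y i = 1) (σ : Perm α) :
    ∏ i, p (σ i) ^ y i * (1 - p (σ i)) ^ (1 - y i)
      = bernoulliWeight p (({i | y i = 1} : Finset α).image σ) := by
  rw [Fintype.prod_equiv σ _ (fun j => p j ^ y (σ.symm j) * (1 - p j) ^ (1 - y (σ.symm j)))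
      (by simp), prod_pow_mul_one_sub_pow_eq_bernoulliWeight p fun j => hy _]
  congr 1
  rw [eq_comm, Perm.image_finset_eq_iff]
  simp

theorem sum_powersetCard_bernoulliWeight_le_one {p : α → ℝ} (hp : ∀ i, p i ∈ Set.Icc 0 1)
    (k : ℕ) : ∑ t ∈ powersetCard k univ, bernoulliWeight p t ≤ 1 :=
  (sum_le_univ_sum_of_nonneg (bernoulliWeight_nonneg hp)).trans_eq (sum_bernoulliWeight p)

theorem sum_powersetCard_bernoulliWeight_eq_one_iff {p : α → ℝ} (hp : ∀ i, p i ∈ Set.Icc 0 1)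
    (k : ℕ) : ∑ t ∈ powersetCard k univ, bernoulliWeight p t = 1 ↔
      ∀ t, bernoulliWeight p t ≠ 0 → #t = k := by
  have hsplit := sum_filter_add_sum_filter_not univ (fun t => #t = k) (bernoulliWeight p)
  have hfilter : ({t | #t = k} : Finset (Finset α)) = powersetCard k univ := by
    ext t; simp
  rw [sum_bernoulliWeight, hfilter] at hsplit
  have hrest : ∑ t with #t ≠ k, bernoulliWeight p t = 0 ↔
      ∀ t, bernoulliWeight p t ≠ 0 → #t = k := by
    rw [sum_eq_zero_iff_of_nonneg fun t _ => bernoulliWeight_nonneg hp t]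
    simp only [mem_filter, mem_univ, true_and, not_imp_comm]
  rw [← hrest]
  constructor <;> intro h <;> linarith

theorem forall_bernoulliWeight_ne_zero_card_eq_iff {p : α → ℝ} {k l : ℕ}
    (hkl : k + l = Fintype.card α) :
    (∀ t, bernoulliWeight p t ≠ 0 → #t = k) ↔ #{i | p i = 1} = k ∧ #{i | p i = 0} = l := by
  set O : Finset α := {i | p i = 1}
  set Z : Finset α := {i | p i = 0}
  have hZO : Z ⊆ Oᶜ := fun j hj => by simp_all [O, Z]
  have hO : bernoulliWeight p O ≠ 0 :=
    bernoulliWeight_ne_zero_iff.2 ⟨fun j hj => by simp_all [O], by simp [O]⟩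
  constructor
  · intro hsupp
    have hOk : #O = k := hsupp O hO
    have hOZ : Oᶜ ⊆ Z := by
      intro j hj
      by_contra hpj
      have hins : bernoulliWeight p (insert j O) ≠ 0 := by
        refine bernoulliWeight_ne_zero_iff.2 ⟨fun i hi => ?_, fun i hi => ?_⟩
        · rcases mem_insert.1 hi with rfl | hi
          · simpa [Z] using hpj
          · simp_all [O]
        · simp_all [O]
      have := hsupp _ hins
      rw [card_insert_of_notMem (mem_compl.1 hj)] at this
      omega
    refine ⟨hOk, ?_⟩
    rw [subset_antisymm hZO hOZ, card_compl]
    omega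
  · rintro ⟨hOk, hZl⟩ t ht
    have hZO : Z = Oᶜ := eq_of_subset_of_card_le hZO (by rw [card_compl]; omega)
    obtain ⟨hpos, hlt⟩ := bernoulliWeight_ne_zero_iff.1 ht
    suffices t = O from this ▸ hOk
    ext j
    refine ⟨fun hj => ?_, fun hj => ?_⟩
    · by_contra hjO
      have hjZ : j ∈ Z := hZO ▸ mem_compl.2 hjO
      exact hpos j hj (mem_filter.1 hjZ).2
    · by_contra hjt
      simp_all [O]

open scoped Classical in
theorem cd_mle_two_point_general (k : ℕ) (m : ℕ) (hm : m = 2 * k)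
    (y : Fin m → ℕ) (hy : ∀ i, y i = 0 ∨ y i = 1) (hsum : ∑ i, y i = k) :
    (∀ p : Fin m → ℝ, (∀ i, p i ∈ Set.Icc (0 : ℝ) 1) →
        (∑ σ : Equiv.Perm (Fin m), ∏ i, (p (σ i)) ^ (y i) * (1 - p (σ i)) ^ (1 - y i))
          ≤ ((Nat.factorial k : ℝ)) ^ 2)
    ∧ (∃ p : Fin m → ℝ, (∀ i, p i ∈ Set.Icc (0 : ℝ) 1) ∧
        (∑ σ : Equiv.Perm (Fin m), ∏ i, (p (σ i)) ^ (y i) * (1 - p (σ i)) ^ (1 - y i))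
          = ((Nat.factorial k : ℝ)) ^ 2)
    ∧ (∀ p : Fin m → ℝ, (∀ i, p i ∈ Set.Icc (0 : ℝ) 1) →
        ((∑ σ : Equiv.Perm (Fin m), ∏ i, (p (σ i)) ^ (y i) * (1 - p (σ i)) ^ (1 - y i))
            = ((Nat.factorial k : ℝ)) ^ 2
          ↔ (Finset.univ.filter fun i => p i = 1).card = k
            ∧ (Finset.univ.filter fun i => p i = 0).card = k)) := by
  set Y : Finset (Fin m) := {i | y i = 1}
  have hY : #Y = k := by rw [← hsum, sum_eq_card_filter_eq_one _ _ fun i _ => hy i]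
  have hYc : #Yᶜ = k := by rw [card_compl, Fintype.card_fin, hY]; omega
  have hL (p : Fin m → ℝ) :
      ∑ σ : Perm (Fin m), ∏ i, p (σ i) ^ y i * (1 - p (σ i)) ^ (1 - y i)
        = (k ! : ℝ) ^ 2 * ∑ S ∈ powersetCard k univ, bernoulliWeight p S := by
    simp_rw [prod_perm_pow_mul_one_sub_pow_eq_bernoulliWeight p hy]
    rw [Perm.sum_image_finset, hY, hYc, nsmul_eq_mul]
    push_cast
    ring
  have hmax (p : Fin m → ℝ) (hp : ∀ i, p i ∈ Set.Icc (0 : ℝ) 1) :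
      ∑ σ : Perm (Fin m), ∏ i, p (σ i) ^ y i * (1 - p (σ i)) ^ (1 - y i) = (k ! : ℝ) ^ 2 ↔
        #{i | p i = 1} = k ∧ #{i | p i = 0} = k := by
    rw [hL, mul_eq_left₀ (by positivity), sum_powersetCard_bernoulliWeight_eq_one_iff hp,
      forall_bernoulliWeight_ne_zero_card_eq_iff (by rw [Fintype.card_fin, hm]; ring)]
  have hY01 : ∀ i, (if y i = 1 then 1 else 0 : ℝ) ∈ Set.Icc 0 1 := fun i => by split_ifs <;> simp
  refine ⟨fun p hp => ?_, ⟨_, hY01, (hmax _ hY01).2 ?_⟩, hmax⟩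
  · rw [hL]
    exact mul_le_of_le_one_right (by positivity) (sum_powersetCard_bernoulliWeight_le_one hp k)
  · simpa [Y, compl_filter] using And.intro hY hYc

open scoped Classical in
/-- Compound-decision mle (Example 1): with `m = 2k` and data `y ∈ {0,1}^m`, `∑ y i = k`,
the permutation-invariant likelihood
`L(p) = ∑_{σ ∈ S_m} ∏ i, p_{σ(i)}^{y i} (1 - p_{σ(i)})^{1 - y i}`
on `[0,1]^m` has maximum value `(k!)^2`, attained exactly at the vectors `p` with exactly
`k` coordinates equal to `1` and exactly `k` coordinates equal to `0`; i.e. the mle of the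
empirical distribution of `p_1,...,p_m` is unique, putting mass `1/2` at `0` and `1/2` at `1`. -/
theorem cd_mle_two_point (k : ℕ) (hk : 1 ≤ k) (m : ℕ) (hm : m = 2 * k)
    (y : Fin m → ℕ) (hy : ∀ i, y i = 0 ∨ y i = 1) (hsum : ∑ i, y i = k) :
    (∀ p : Fin m → ℝ, (∀ i, p i ∈ Set.Icc (0 : ℝ) 1) →
        (∑ σ : Equiv.Perm (Fin m), ∏ i, (p (σ i)) ^ (y i) * (1 - p (σ i)) ^ (1 - y i))
          ≤ ((Nat.factorial k : ℝ)) ^ 2)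
    ∧ (∃ p : Fin m → ℝ, (∀ i, p i ∈ Set.Icc (0 : ℝ) 1) ∧
        (∑ σ : Equiv.Perm (Fin m), ∏ i, (p (σ i)) ^ (y i) * (1 - p (σ i)) ^ (1 - y i))
          = ((Nat.factorial k : ℝ)) ^ 2)
    ∧ (∀ p : Fin m → ℝ, (∀ i, p i ∈ Set.Icc (0 : ℝ) 1) →
        ((∑ σ : Equiv.Perm (Fin m), ∏ i, (p (σ i)) ^ (y i) * (1 - p (σ i)) ^ (1 - y i))
            = ((Nat.factorial k : ℝ)) ^ 2
          ↔ (Finset.univ.filter fun i => p i = 1).card = k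
            ∧ (Finset.univ.filter fun i => p i = 0).card = k)) :=
  cd_mle_two_point_general k m hm y hy hsum
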